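/- With a_n^α = n^γ log n, the expected number of edges E|E_n| = C(n,2)·P(X_1 X_2 > a_n) in the graph on n i.i.d. power-law vertices is asymptotically (γ/2) n^{2-γ} as n → ∞. -/

import Mathlib

open MeasureTheory Filter Real Set

noncomputable def paretoMeasure (α : ℝ) : Measure ℝ :=
  MeasureTheory.volume.withDensity
    (fun x => ENNReal.ofReal (if 1 ≤ x then α * x ^ (-α - 1) else 0))

noncomputable def aSeq (α γ : ℝ) (n : ℕ) : ℝ := ((n : ℝ) ^ γ * Real.log n) ^ (1/α)

/-! For `x ≥ 1` the slice probability `P(X₂ > t / x)` is `min 1 ((x / t) ^ α)`, so integrating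
it against the Pareto density gives `P(X₁ X₂ > t) = t ^ (-α) * (1 + α * log t)` for `t ≥ 1`.
At `t = a_n` this equals `(1 + γ log n + log log n) / (n ^ γ log n)`, and multiplying by
`n (n - 1) / 2` gives `(γ / 2) n ^ (2 - γ) (1 - 1 / n) (1 + O(log log n / log n))`. -/

lemma paretoMeasure_eq_withDensity_restrict (α : ℝ) :
    paretoMeasure α =
      (volume.restrict (Ici 1)).withDensity fun x => ENNReal.ofReal (α * x ^ (-α - 1)) := by
  rw [paretoMeasure, ← withDensity_indicator measurableSet_Ici]
  congr 1
  ext x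
  by_cases hx : 1 ≤ x <;> simp [hx]

instance (α : ℝ) : SFinite (paretoMeasure α) := by
  rw [paretoMeasure_eq_withDensity_restrict]; infer_instance

lemma lintegral_Ioi_mul_rpow_neg_sub_one {α : ℝ} (hα : 0 < α) {s : ℝ} (hs : 0 < s) :
    ∫⁻ x in Ioi s, ENNReal.ofReal (α * x ^ (-α - 1)) = ENNReal.ofReal (s ^ (-α)) := by
  have hint : IntegrableOn (fun x : ℝ => α * x ^ (-α - 1)) (Ioi s) :=
    (integrableOn_Ioi_rpow_of_lt (by linarith) hs).const_mul α
  rw [← ofReal_integral_eq_lintegral_ofReal hint, integral_const_mul,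
    integral_Ioi_rpow_of_lt (by linarith) hs, sub_add_cancel]
  · congr 1; field_simp
  · filter_upwards [ae_restrict_mem measurableSet_Ioi] with x hx
    exact mul_nonneg hα.le (rpow_nonneg (hs.trans hx).le _)

lemma lintegral_Icc_one_inv {t : ℝ} (ht : 1 ≤ t) :
    ∫⁻ x in Icc 1 t, ENNReal.ofReal x⁻¹ = ENNReal.ofReal (log t) := by
  have hint : IntegrableOn (fun x : ℝ => x⁻¹) (Ioc 1 t) :=
    (continuousOn_inv₀.mono fun x hx => (zero_lt_one.trans_le hx.1).ne').integrableOn_Icc.mono_set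
      Ioc_subset_Icc_self
  rw [← setLIntegral_congr Ioc_ae_eq_Icc, ← ofReal_integral_eq_lintegral_ofReal hint,
    ← intervalIntegral.integral_of_le ht, integral_inv_of_pos one_pos (by linarith), div_one]
  filter_upwards [ae_restrict_mem measurableSet_Ioc] with x hx
  exact inv_nonneg.2 (zero_le_one.trans hx.1.le)

lemma paretoMeasure_Ioi {α : ℝ} (hα : 0 < α) (s : ℝ) :
    paretoMeasure α (Ioi s) = ENNReal.ofReal (max s 1 ^ (-α)) := by
  have hs : (Ioi s ∩ Ici 1 : Set ℝ) =ᵐ[volume] Ioi (max s 1) := by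
    rw [← Ioi_inter_Ioi]
    exact (ae_eq_refl _).inter Ioi_ae_eq_Ici.symm
  rw [paretoMeasure_eq_withDensity_restrict, withDensity_apply _ measurableSet_Ioi,
    Measure.restrict_restrict measurableSet_Ioi, setLIntegral_congr hs,
    lintegral_Ioi_mul_rpow_neg_sub_one hα (by positivity)]

lemma lintegral_paretoMeasure {α : ℝ} {f : ℝ → ENNReal} (hf : Measurable f) :
    ∫⁻ x, f x ∂paretoMeasure α =
      ∫⁻ x in Ici 1, ENNReal.ofReal (α * x ^ (-α - 1)) * f x := by
  rw [paretoMeasure_eq_withDensity_restrict,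
    lintegral_withDensity_eq_lintegral_mul _ (by fun_prop) hf]
  rfl

lemma paretoMeasure_preimage_mul_gt {α : ℝ} (hα : 0 < α) {x : ℝ} (hx : 0 < x) (t : ℝ) :
    paretoMeasure α (Prod.mk x ⁻¹' {p : ℝ × ℝ | p.1 * p.2 > t}) =
      ENNReal.ofReal (max (t / x) 1 ^ (-α)) := by
  have h : Prod.mk x ⁻¹' {p : ℝ × ℝ | p.1 * p.2 > t} = Ioi (t / x) := by
    ext y
    simp [div_lt_iff₀ hx, mul_comm]
  rw [h, paretoMeasure_Ioi hα]

lemma paretoMeasure_prod_mul_gt {α : ℝ} (hα : 0 < α) {t : ℝ} (ht : 1 ≤ t) :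
    ((paretoMeasure α).prod (paretoMeasure α)) {p : ℝ × ℝ | p.1 * p.2 > t} =
      ENNReal.ofReal (t ^ (-α) * (1 + α * log t)) := by
  have ht0 : 0 < t := zero_lt_one.trans_le ht
  have hS : MeasurableSet {p : ℝ × ℝ | p.1 * p.2 > t} :=
    measurableSet_lt measurable_const (measurable_fst.mul measurable_snd)
  have hinner : ∀ x ∈ Icc 1 t, ENNReal.ofReal (α * x ^ (-α - 1)) *
      paretoMeasure α (Prod.mk x ⁻¹' {p : ℝ × ℝ | p.1 * p.2 > t}) =
        ENNReal.ofReal (α * t ^ (-α)) * ENNReal.ofReal x⁻¹ := by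
    rintro x ⟨hx1, hxt⟩
    have hx0 : 0 < x := zero_lt_one.trans_le hx1
    rw [paretoMeasure_preimage_mul_gt hα hx0, max_eq_left ((one_le_div hx0).2 hxt),
      ← ENNReal.ofReal_mul (by positivity), ← ENNReal.ofReal_mul (by positivity)]
    congr 1
    rw [div_rpow ht0.le hx0.le, rpow_sub_one hx0.ne', rpow_neg hx0.le, rpow_neg ht0.le]
    field_simp
  have houter : ∀ x ∈ Ioi t, ENNReal.ofReal (α * x ^ (-α - 1)) *
      paretoMeasure α (Prod.mk x ⁻¹' {p : ℝ × ℝ | p.1 * p.2 > t}) =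
        ENNReal.ofReal (α * x ^ (-α - 1)) := by
    intro x hx
    have hx0 : 0 < x := ht0.trans hx
    rw [paretoMeasure_preimage_mul_gt hα hx0, max_eq_right ((div_le_one hx0).2 (le_of_lt hx)),
      one_rpow, ENNReal.ofReal_one, mul_one]
  rw [Measure.prod_apply hS, lintegral_paretoMeasure (measurable_measure_prodMk_left hS),
    ← Icc_union_Ioi_eq_Ici ht,
    lintegral_union measurableSet_Ioi (Set.disjoint_left.2 fun _ hx hx' => not_lt.2 hx.2 hx'),
    setLIntegral_congr_fun measurableSet_Icc hinner,
    setLIntegral_congr_fun measurableSet_Ioi houter,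
    lintegral_const_mul _ (by fun_prop), lintegral_Icc_one_inv ht,
    lintegral_Ioi_mul_rpow_neg_sub_one hα ht0, ← ENNReal.ofReal_mul (by positivity),
    ← ENNReal.ofReal_add (mul_nonneg (by positivity) (log_nonneg ht)) (by positivity)]
  congr 1
  ring

lemma tendsto_one_add_mul_add_log_div_mul {γ : ℝ} (hγ : 0 < γ) :
    Tendsto (fun L => (1 + γ * L + log L) / (γ * L)) atTop (nhds 1) := by
  have h : Tendsto (fun L => 1 + (L⁻¹ + log L / L) / γ) atTop (nhds (1 + (0 + 0) / γ)) :=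
    (tendsto_inv_atTop_zero.add isLittleO_log_id_atTop.tendsto_div_nhds_zero).div_const γ
      |>.const_add 1
  rw [add_zero, zero_div, add_zero] at h
  refine h.congr' ?_
  filter_upwards [eventually_gt_atTop 0] with L hL
  field_simp
  ring

lemma one_le_log_natCast {n : ℕ} (hn : 3 ≤ n) : 1 ≤ log n := by
  rw [le_log_iff_exp_le (by positivity)]
  have : (3 : ℝ) ≤ n := by exact_mod_cast hn
  linarith [exp_one_lt_d9]

lemma aSeq_rpow_neg {α : ℝ} (hα : α ≠ 0) (γ : ℝ) (n : ℕ) :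
    aSeq α γ n ^ (-α) = ((n : ℝ) ^ γ * log n)⁻¹ := by
  rw [aSeq, ← rpow_mul (mul_nonneg (by positivity) (log_natCast_nonneg n)), one_div_mul_eq_div,
    neg_div, div_self hα, rpow_neg_one]

lemma mul_log_aSeq {α γ : ℝ} (hα : α ≠ 0) {n : ℕ} (hn : 2 ≤ n) :
    α * log (aSeq α γ n) = γ * log n + log (log n) := by
  have hn0 : (0 : ℝ) < n := by positivity
  have hlog : 0 < log n := log_pos (by exact_mod_cast hn)
  rw [aSeq, log_rpow (by positivity), log_mul (by positivity) hlog.ne', log_rpow hn0]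
  field_simp

lemma one_le_aSeq {α γ : ℝ} (hα : 0 < α) (hγ : 0 ≤ γ) {n : ℕ} (hn : 3 ≤ n) :
    1 ≤ aSeq α γ n := by
  have hn1 : (1 : ℝ) ≤ n := Nat.one_le_cast.2 (by omega)
  refine one_le_rpow ?_ (by positivity)
  nlinarith [one_le_rpow hn1 hγ, one_le_log_natCast hn]

lemma expectedEdges_div_eq {α γ : ℝ} (hα : 0 < α) (hγ : 0 < γ) {n : ℕ} (hn : 3 ≤ n) :
    (n.choose 2 : ℝ) *
        (((paretoMeasure α).prod (paretoMeasure α))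
          {p : ℝ × ℝ | p.1 * p.2 > aSeq α γ n}).toReal
      / ((γ / 2) * (n : ℝ) ^ (2 - γ)) =
      (1 - 1 / (n : ℝ)) * ((1 + γ * log n + log (log n)) / (γ * log n)) := by
  have hn0 : (0 : ℝ) < n := by positivity
  have hlog : 0 < log n := zero_lt_one.trans_le (one_le_log_natCast hn)
  have ht := one_le_aSeq hα hγ.le hn
  rw [paretoMeasure_prod_mul_gt hα ht,
    ENNReal.toReal_ofReal (mul_nonneg (by positivity) (by nlinarith [log_nonneg ht])),
    mul_add, mul_one, mul_log_aSeq hα.ne' (by omega), aSeq_rpow_neg hα.ne',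
    Nat.cast_choose_two, rpow_sub hn0, rpow_two]
  field_simp
  ring

theorem stmt6 (α γ : ℝ) (hα : 0 < α) (hγ : 0 < γ) :
    Tendsto (fun n : ℕ =>
      (n.choose 2 : ℝ) *
        (((paretoMeasure α).prod (paretoMeasure α))
          {p : ℝ × ℝ | p.1 * p.2 > aSeq α γ n}).toReal
      / ((γ / 2) * (n : ℝ) ^ (2 - γ))) atTop (nhds 1) := by
  have hfactor : Tendsto (fun n : ℕ => 1 - 1 / (n : ℝ)) atTop (nhds 1) := by
    simpa using (tendsto_one_div_atTop_nhds_zero_nat (𝕜 := ℝ)).const_sub 1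
  have hlog := (tendsto_one_add_mul_add_log_div_mul hγ).comp
    (tendsto_log_atTop.comp tendsto_natCast_atTop_atTop)
  refine (one_mul (1 : ℝ) ▸ hfactor.mul hlog).congr' ?_
  filter_upwards [eventually_ge_atTop 3] with n hn
  exact (expectedEdges_div_eq hα hγ hn).symm
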